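/- arXiv:2204.02856 — 5 statements merged into one kernel-verified Lean document; each statement's English description precedes it below -/
import Mathlib

section
/- Let α > 0 and c₀ > 0. There exists a constant c = c(α, c₀) > 0 such that for every measurable function u : ℂ → ℝ with ∫_{𝔻₁} e^{2α u²} dLeb ≤ c₀ and every compact set K ⊆ 𝔻₁ with Leb(K) > 0, one has ∫_K |u| dLeb ≤ c · Leb(K) · (1 + |log Leb(K)|)^{1/2}. -/
/-!
Split `|u|` at a threshold `s`: where `|u| ≤ s` it contributes at most `s · Leb(K)`, and where
`|u| > s` the elementary bound `2 √α |u| ≤ exp (α u²) ≤ exp (-α s²) exp (2 α u²)` lets the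
exponential integrability pay for it. Choosing `α s² = log⋆ Leb(K)` makes `exp (-α s²) ≤ Leb(K)`,
so both contributions are `O(Leb(K) (log⋆ Leb(K))^{1/2})`.
-/

open MeasureTheory Real

theorem abs_le_add_exp_sq {α s : ℝ} (hα : 0 < α) (hs : 0 ≤ s) (x : ℝ) :
    |x| ≤ s + exp (-(α * s ^ 2)) / (2 * √α) * exp (2 * α * x ^ 2) := by
  rcases le_or_gt |x| s with hxs | hsx
  · have : 0 ≤ exp (-(α * s ^ 2)) / (2 * √α) * exp (2 * α * x ^ 2) := by positivity
    linarith
  · have hsq : s ^ 2 ≤ x ^ 2 := by simpa only [sq_abs] using pow_le_pow_left₀ hs hsx.le 2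
    -- AM-GM: `2 √α |x| ≤ 1 + α x² ≤ exp (α x²)`
    have hamgm : 2 * √α * |x| ≤ exp (α * x ^ 2) := by
      nlinarith [add_one_le_exp (α * x ^ 2), sq_nonneg (√α * |x| - 1), sq_sqrt hα.le, sq_abs x]
    have hexp : exp (α * x ^ 2) ≤ exp (-(α * s ^ 2)) * exp (2 * α * x ^ 2) := by
      rw [← exp_add]
      exact exp_le_exp.2 (by nlinarith)
    have : |x| ≤ exp (-(α * s ^ 2)) / (2 * √α) * exp (2 * α * x ^ 2) := by
      rw [div_mul_eq_mul_div, le_div_iff₀ (by positivity)]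
      linarith
    linarith

theorem integral_abs_le_of_lintegral_exp_sq_le {X : Type*} [MeasurableSpace X] {μ : Measure X}
    [IsFiniteMeasure μ] {u : X → ℝ} {α c₀ s : ℝ} (hα : 0 < α) (hc₀ : 0 ≤ c₀) (hs : 0 ≤ s)
    (hu : ∫⁻ x, ENNReal.ofReal (exp (2 * α * u x ^ 2)) ∂μ ≤ ENNReal.ofReal c₀) :
    ∫ x, |u x| ∂μ ≤ s * μ.real Set.univ + exp (-(α * s ^ 2)) / (2 * √α) * c₀ := by
  set C := exp (-(α * s ^ 2)) / (2 * √α)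
  have hC : 0 ≤ C := by positivity
  have hlint : ∫⁻ x, ‖|u x|‖ₑ ∂μ ≤ ENNReal.ofReal (s * μ.real Set.univ + C * c₀) :=
    calc ∫⁻ x, ‖|u x|‖ₑ ∂μ
        ≤ ∫⁻ x, ENNReal.ofReal s
            + ENNReal.ofReal C * ENNReal.ofReal (exp (2 * α * u x ^ 2)) ∂μ := by
          refine lintegral_mono fun x => ?_
          rw [Real.enorm_eq_ofReal_abs, abs_abs, ← ENNReal.ofReal_mul hC,
            ← ENNReal.ofReal_add hs (by positivity)]
          exact ENNReal.ofReal_le_ofReal (abs_le_add_exp_sq hα hs (u x))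
      _ = ENNReal.ofReal s * μ Set.univ
            + ENNReal.ofReal C * ∫⁻ x, ENNReal.ofReal (exp (2 * α * u x ^ 2)) ∂μ := by
          rw [lintegral_add_left measurable_const, lintegral_const,
            lintegral_const_mul' _ _ ENNReal.ofReal_ne_top]
      _ ≤ ENNReal.ofReal s * μ Set.univ + ENNReal.ofReal C * ENNReal.ofReal c₀ := by gcongr
      _ = ENNReal.ofReal (s * μ.real Set.univ + C * c₀) := by
          rw [ENNReal.ofReal_add (by positivity) (by positivity), ENNReal.ofReal_mul hs,
            ENNReal.ofReal_mul hC, measureReal_def, ENNReal.ofReal_toReal (measure_ne_top μ _)]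
  have := (enorm_integral_le_lintegral_enorm (fun x => |u x|)).trans hlint
  rwa [Real.enorm_of_nonneg (integral_nonneg fun x => abs_nonneg _),
    ENNReal.ofReal_le_ofReal_iff (by positivity)] at this

theorem exp_neg_one_add_abs_log_le {m : ℝ} (hm : 0 < m) : exp (-(1 + |log m|)) ≤ m :=
  calc exp (-(1 + |log m|)) ≤ exp (log m) := exp_le_exp.2 (by linarith [neg_abs_le (log m)])
    _ = m := exp_log hm

/-- If `∫_{𝔻₁} e^{2 α u²} ≤ c₀`, then `∫_K |u| ≤ c ⋅ Leb(K) ⋅ (log⋆ Leb(K))^{1/2}`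
for every compact `K ⊆ 𝔻₁` of positive measure, with `c` depending only on `α, c₀`. -/
theorem stmt2 (α c₀ : ℝ) (hα : 0 < α) (hc₀ : 0 < c₀) :
    ∃ c : ℝ, 0 < c ∧
      ∀ u : ℂ → ℝ, Measurable u →
        (∫⁻ z in Metric.ball (0 : ℂ) 1, ENNReal.ofReal (Real.exp (2 * α * (u z) ^ 2))
            ≤ ENNReal.ofReal c₀) →
        ∀ K : Set ℂ, IsCompact K → K ⊆ Metric.ball (0 : ℂ) 1 →
          0 < (volume K).toReal →
          ∫ z in K, |u z| ≤
            c * (volume K).toReal * (1 + |Real.log ((volume K).toReal)|) ^ ((1 : ℝ) / 2) := by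
  refine ⟨(1 + c₀) / √α, by positivity, fun u _ hu K hK hKball hm => ?_⟩
  have : IsFiniteMeasure (volume.restrict K) := isFiniteMeasure_restrict.2 hK.measure_lt_top.ne
  set m := (volume K).toReal
  set L := 1 + |log m|
  have hL : 1 ≤ L := by linarith [abs_nonneg (log m)]
  have hαs : α * √(L / α) ^ 2 = L := by
    rw [sq_sqrt (by positivity), mul_div_cancel₀ _ hα.ne']
  have hbound := integral_abs_le_of_lintegral_exp_sq_le (μ := volume.restrict K) hα hc₀.le
    (sqrt_nonneg (L / α)) ((lintegral_mono_set hKball).trans hu)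
  rw [measureReal_restrict_apply_univ, hαs, sqrt_div' _ hα.le] at hbound
  have hexpL : exp (-L) ≤ m := exp_neg_one_add_abs_log_le hm
  have hsqrtL : 1 ≤ √L := one_le_sqrt.2 hL
  calc ∫ z in K, |u z| ≤ √L / √α * m + exp (-L) / (2 * √α) * c₀ := hbound
    _ ≤ √L / √α * m + m / (2 * √α) * c₀ := by gcongr
    _ = (√L * m + m * c₀ / 2) / √α := by ring
    _ ≤ (1 + c₀) * m * √L / √α := by
        gcongr
        nlinarith [mul_le_mul_of_nonneg_left hsqrtL (mul_nonneg hm.le hc₀.le)]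
    _ = (1 + c₀) / √α * m * L ^ ((1 : ℝ) / 2) := by rw [← sqrt_eq_rpow]; ring
end

section
/- Let (X, d) be a metric space, let γ > 0, q > 0, C ≥ 0, and let g : X → ℝ. Assume that for every ε ∈ (0, 1] there exist functions g₁, g₂ : X → ℝ with g = g₁ + g₂ such that sup_{x ∈ X} |g₂(x)| ≤ ε and |g₁(x) − g₁(y)| ≤ C · ε^{−1/γ} · (1 + |log d(x, y)|)^{−q} for all x ≠ y in X. Then for all x, y ∈ X with 0 < d(x, y) ≤ 1, one has |g(x) − g(y)| ≤ (C + 2) · (1 + |log d(x, y)|)^{−q·γ/(γ+1)}. -/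
/-! Split `g = g₁ + g₂` at the scale `ε = L ^ (-(qγ/(γ+1)))`, where `L = 1 + |log d(x, y)|`:
this choice balances the two errors, since then `ε ^ (-1/γ) * L ^ (-q) = ε`, so
`|g x - g y| ≤ C ε ^ (-1/γ) L ^ (-q) + 2ε = (C + 2) ε`. -/

open Real

lemma abs_sub_le_of_eq_add {X : Type*} {g g₁ g₂ : X → ℝ} {ε : ℝ} (hg : g = g₁ + g₂)
    (hg₂ : ∀ x, |g₂ x| ≤ ε) (x y : X) :
    |g x - g y| ≤ |g₁ x - g₁ y| + 2 * ε := by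
  have hsplit : g x - g y = (g₁ x - g₁ y) + (g₂ x - g₂ y) := by
    simp only [hg, Pi.add_apply]; ring
  calc |g x - g y| ≤ |g₁ x - g₁ y| + |g₂ x - g₂ y| := hsplit ▸ abs_add_le _ _
    _ ≤ |g₁ x - g₁ y| + (|g₂ x| + |g₂ y|) := by gcongr; exact abs_sub _ _
    _ ≤ |g₁ x - g₁ y| + 2 * ε := by linarith [hg₂ x, hg₂ y]

lemma rpow_neg_div_mul_rpow_neg_eq {L γ q : ℝ} (hL : 0 < L) (hγ : γ ≠ 0) (hγ' : γ + 1 ≠ 0) :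
    (L ^ (-(q * γ / (γ + 1)))) ^ (-1 / γ) * L ^ (-q) = L ^ (-(q * γ / (γ + 1))) := by
  rw [← rpow_mul hL.le, ← rpow_add hL]
  congr 1
  field_simp
  ring

theorem stmt7_general {X : Type*} [MetricSpace X] (γ q C : ℝ) (hγ : 0 < γ) (hq : 0 < q)
    (g : X → ℝ)
    (hdec : ∀ ε : ℝ, 0 < ε → ε ≤ 1 →
      ∃ g₁ g₂ : X → ℝ, g = g₁ + g₂ ∧ (∀ x, |g₂ x| ≤ ε) ∧
        ∀ x y : X, x ≠ y →
          |g₁ x - g₁ y| ≤ C * ε ^ (-(1 : ℝ) / γ) * (1 + |Real.log (dist x y)|) ^ (-q)) :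
    ∀ x y : X, 0 < dist x y → dist x y ≤ 1 →
      |g x - g y| ≤ (C + 2) * (1 + |Real.log (dist x y)|) ^ (-(q * γ / (γ + 1))) := by
  intro x y hd _
  set L := 1 + |Real.log (dist x y)|
  have hL : 1 ≤ L := le_add_of_nonneg_right (abs_nonneg _)
  set ε := L ^ (-(q * γ / (γ + 1)))
  have hε1 : ε ≤ 1 := rpow_le_one_of_one_le_of_nonpos hL (neg_nonpos.mpr (by positivity))
  obtain ⟨g₁, g₂, hg, hg₂, hg₁⟩ := hdec ε (rpow_pos_of_pos (by linarith) _) hε1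
  calc |g x - g y| ≤ C * ε ^ (-(1 : ℝ) / γ) * L ^ (-q) + 2 * ε :=
        (abs_sub_le_of_eq_add hg hg₂ x y).trans (by gcongr; exact hg₁ x y (dist_pos.mp hd))
    _ = (C + 2) * ε := by
        rw [mul_assoc, rpow_neg_div_mul_rpow_neg_eq (by linarith) hγ.ne' (by linarith)]; ring

/-- Interpolation: if for every `ε ∈ (0,1]` the function `g` splits into a
`log^q`-continuous part of size `C ε^{-1/γ}` and a part of sup-norm at most `ε`,
then `g` is `log^{qγ/(γ+1)}`-continuous. -/
theorem stmt7 {X : Type*} [MetricSpace X] (γ q C : ℝ) (hγ : 0 < γ) (hq : 0 < q)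
    (hC : 0 ≤ C) (g : X → ℝ)
    (hdec : ∀ ε : ℝ, 0 < ε → ε ≤ 1 →
      ∃ g₁ g₂ : X → ℝ, g = g₁ + g₂ ∧ (∀ x, |g₂ x| ≤ ε) ∧
        ∀ x y : X, x ≠ y →
          |g₁ x - g₁ y| ≤ C * ε ^ (-(1 : ℝ) / γ) * (1 + |Real.log (dist x y)|) ^ (-q)) :
    ∀ x y : X, 0 < dist x y → dist x y ≤ 1 →
      |g x - g y| ≤ (C + 2) * (1 + |Real.log (dist x y)|) ^ (-(q * γ / (γ + 1))) :=
  stmt7_general γ q C hγ hq g hdec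
end

section
/- Let X be a set, let N be a function assigning to every bounded function w : X → ℝ a value N(w) ∈ [0, ∞], and let γ > 0. Define the interpolated functional N_γ(g) := inf{ c ≥ 0 : for every ε ∈ (0,1] there exist g₁, g₂ : X → ℝ with g = g₁ + g₂, N(g₁) ≤ c·ε^{−1/γ} and sup_X |g₂| ≤ c·ε } (with N_γ(g) := ∞ if no such c exists). Assume N is absolutely homogeneous (N(t·w) = |t|·N(w) for all t ∈ ℝ and all w) and satisfies N(w·h) ≤ √2·( N(w)·sup_X|h| + sup_X|w|·N(h) ) for all bounded w, h : X → ℝ. Then for all bounded functions g, h : X → ℝ with 0 < N_γ(g) < ∞ and 0 < N_γ(h) < ∞, one has N_γ(g·h) ≤ 3·( N_γ(g)·sup_X|h| + sup_X|g|·N_γ(h) ). -/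
open scoped ENNReal NNReal

/-!
Split `g = g₁ + g₂` and `h = h₁ + h₂` at the same scale `ε` with constants `c` and `d`, and write
`gh = g₁h₁ + (g₁h₂ + g₂h)`. With `K = c sup|h| + sup|g| d`, the Leibniz rule for `N` bounds
`N(g₁h₁)` by `C ε^{-1/γ} (K + 2cdε)`, and the remainder has sup at most `ε (K + cdε)`. When
`2cdε ≤ K` this gives the constant `2C = 2√2 ≤ 3`; otherwise `sup|h| < 2dε`, and the trivial
splitting `gh = 0 + gh` already works. Finally let `c ↓ N_γ(g)` and `d ↓ N_γ(h)`.
-/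

/-- The interpolated functional `N_γ` associated to a functional `N` on functions:
`N_γ(g)` is the infimum of the constants `c` such that, for every `ε ∈ (0,1]`,
`g` splits as `g₁ + g₂` with `N(g₁) ≤ c ε^{-1/γ}` and `sup|g₂| ≤ c ε`. -/
noncomputable def interpNorm {X : Type*} (N : (X → ℝ) → ℝ≥0∞) (γ : ℝ) (g : X → ℝ) :
    ℝ≥0∞ :=
  sInf {c : ℝ≥0∞ | ∀ ε : ℝ, 0 < ε → ε ≤ 1 →
    ∃ g₁ g₂ : X → ℝ, g = g₁ + g₂ ∧
      N g₁ ≤ c * ENNReal.ofReal (ε ^ (-(1 : ℝ) / γ)) ∧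
      ∀ x, ENNReal.ofReal |g₂ x| ≤ c * ENNReal.ofReal ε}

lemma ENNReal.le_of_forall_pos_le_add_mul {a b K : ℝ≥0∞} (hK : K ≠ ⊤)
    (h : ∀ η : ℝ≥0∞, 0 < η → η ≠ ⊤ → a ≤ b + η * K) : a ≤ b := by
  refine ENNReal.le_of_forall_pos_le_add fun δ hδ _ => ?_
  rcases eq_or_ne K 0 with rfl | hK0
  · exact (by simpa using h 1 one_pos one_ne_top : a ≤ b).trans le_self_add
  · have hδK : (δ : ℝ≥0∞) / K ≠ 0 := ENNReal.div_ne_zero.2 ⟨by simpa using hδ.ne', hK⟩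
    simpa [ENNReal.div_mul_cancel hK0 hK] using
      h (δ / K) (pos_iff_ne_zero.2 hδK) (ENNReal.div_ne_top coe_ne_top hK0)

section Splitting

variable {X : Type*}

lemma exists_abs_le_iff_iSup_enorm_ne_top {f : X → ℝ} :
    (∃ M : ℝ, ∀ x, |f x| ≤ M) ↔ (⨆ x, ‖f x‖ₑ) ≠ ⊤ := by
  constructor
  · rintro ⟨M, hM⟩
    refine ne_top_of_le_ne_top (ENNReal.ofReal_ne_top (r := M)) (iSup_le fun x => ?_)
    rw [Real.enorm_eq_ofReal_abs]
    exact ENNReal.ofReal_le_ofReal (hM x)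
  · intro hf
    refine ⟨(⨆ x, ‖f x‖ₑ).toReal, fun x => ?_⟩
    rw [← ENNReal.ofReal_le_iff_le_toReal hf, ← Real.enorm_eq_ofReal_abs]
    exact le_iSup (fun x => ‖f x‖ₑ) x

lemma iSup_enorm_le_of_eq_add {f f₁ f₂ : X → ℝ} (hf : f = f₁ + f₂) {b : ℝ≥0∞}
    (hf₂ : ∀ x, ‖f₂ x‖ₑ ≤ b) : ⨆ x, ‖f₁ x‖ₑ ≤ (⨆ x, ‖f x‖ₑ) + b :=
  iSup_le fun x => by
    have hx : f₁ x = f x - f₂ x := by rw [hf, Pi.add_apply, add_sub_cancel_right]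
    rw [hx]
    exact enorm_sub_le.trans (add_le_add (le_iSup (fun x => ‖f x‖ₑ) x) (hf₂ x))

def HasSplitting (N : (X → ℝ) → ℝ≥0∞) (g : X → ℝ) (a b : ℝ≥0∞) : Prop :=
  ∃ g₁ g₂ : X → ℝ, g = g₁ + g₂ ∧ N g₁ ≤ a ∧ ∀ x, ‖g₂ x‖ₑ ≤ b

def IsInterpBound (N : (X → ℝ) → ℝ≥0∞) (γ : ℝ) (g : X → ℝ) (c : ℝ≥0∞) : Prop :=
  ∀ ε : ℝ, 0 < ε → ε ≤ 1 →
    HasSplitting N g (c * ENNReal.ofReal (ε ^ (-(1 : ℝ) / γ))) (c * ENNReal.ofReal ε)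

def SatisfiesLeibniz (N : (X → ℝ) → ℝ≥0∞) (C : ℝ≥0∞) : Prop :=
  ∀ u v : X → ℝ, (⨆ x, ‖u x‖ₑ) ≠ ⊤ → (⨆ x, ‖v x‖ₑ) ≠ ⊤ →
    N (u * v) ≤ C * (N u * (⨆ x, ‖v x‖ₑ) + (⨆ x, ‖u x‖ₑ) * N v)

variable {N : (X → ℝ) → ℝ≥0∞} {γ : ℝ} {g h : X → ℝ}

lemma interpNorm_eq_sInf : interpNorm N γ g = sInf {c | IsInterpBound N γ g c} := by
  simp only [interpNorm, IsInterpBound, HasSplitting, Real.enorm_eq_ofReal_abs]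

lemma HasSplitting.mono {a b a' b' : ℝ≥0∞} (hs : HasSplitting N g a b) (ha : a ≤ a') (hb : b ≤ b') :
    HasSplitting N g a' b' :=
  let ⟨g₁, g₂, hg, hg₁, hg₂⟩ := hs
  ⟨g₁, g₂, hg, hg₁.trans ha, fun x => (hg₂ x).trans hb⟩

lemma interpNorm_le_of_isInterpBound {c : ℝ≥0∞} (hc : IsInterpBound N γ g c) :
    interpNorm N γ g ≤ c :=
  interpNorm_eq_sInf ▸ sInf_le hc

lemma isInterpBound_of_interpNorm_lt {c : ℝ≥0∞} (hc : interpNorm N γ g < c) :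
    IsInterpBound N γ g c := by
  rw [interpNorm_eq_sInf] at hc
  obtain ⟨c₀, hc₀, hc₀c⟩ := sInf_lt_iff.1 hc
  exact fun ε hε hε₁ => (hc₀ ε hε hε₁).mono (by gcongr) (by gcongr)

lemma hasSplitting_mul_of_lt (hN0 : N 0 = 0) (a : ℝ≥0∞) {c d e L : ℝ≥0∞} (hL : 2 ≤ L)
    (hc : c ≠ ⊤)
    (hlt : c * (⨆ x, ‖h x‖ₑ) + (⨆ x, ‖g x‖ₑ) * d < 2 * (c * d * e)) :
    HasSplitting N (g * h) a (L * (c * (⨆ x, ‖h x‖ₑ) + (⨆ x, ‖g x‖ₑ) * d) * e) := by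
  set S := ⨆ x, ‖h x‖ₑ
  set T := ⨆ x, ‖g x‖ₑ
  have hc0 : c ≠ 0 := by
    rintro rfl
    simp at hlt
  have hS : S ≤ 2 * (d * e) := by
    refine ((ENNReal.mul_lt_mul_iff_right hc0 hc).1 ?_).le
    calc c * S ≤ c * S + T * d := le_self_add
      _ < 2 * (c * d * e) := hlt
      _ = c * (2 * (d * e)) := by ring
  refine ⟨0, g * h, (zero_add _).symm, hN0 ▸ zero_le, fun x => ?_⟩
  calc ‖(g * h) x‖ₑ = ‖g x‖ₑ * ‖h x‖ₑ := enorm_mul _ _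
    _ ≤ T * S := mul_le_mul' (le_iSup (fun x => ‖g x‖ₑ) x) (le_iSup (fun x => ‖h x‖ₑ) x)
    _ ≤ T * (2 * (d * e)) := by gcongr
    _ = 2 * (T * d) * e := by ring
    _ ≤ L * (c * S + T * d) * e := by gcongr; exact le_add_self

lemma hasSplitting_mul_of_two_mul_le {C L : ℝ≥0∞} (hN : SatisfiesLeibniz N C) (hCL : 2 * C ≤ L)
    (hL : 2 ≤ L) (hg : (⨆ x, ‖g x‖ₑ) ≠ ⊤) (hh : (⨆ x, ‖h x‖ₑ) ≠ ⊤) {c d e w : ℝ≥0∞}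
    (hce : c * e ≠ ⊤) (hde : d * e ≠ ⊤)
    (hgs : HasSplitting N g (c * w) (c * e)) (hhs : HasSplitting N h (d * w) (d * e))
    (hle : 2 * (c * d * e) ≤ c * (⨆ x, ‖h x‖ₑ) + (⨆ x, ‖g x‖ₑ) * d) :
    HasSplitting N (g * h) (L * (c * (⨆ x, ‖h x‖ₑ) + (⨆ x, ‖g x‖ₑ) * d) * w)
      (L * (c * (⨆ x, ‖h x‖ₑ) + (⨆ x, ‖g x‖ₑ) * d) * e) := by
  obtain ⟨g₁, g₂, hg_eq, hg₁, hg₂⟩ := hgs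
  obtain ⟨h₁, h₂, hh_eq, hh₁, hh₂⟩ := hhs
  set S := ⨆ x, ‖h x‖ₑ
  set T := ⨆ x, ‖g x‖ₑ
  set K := c * S + T * d
  have hT₁ : ⨆ x, ‖g₁ x‖ₑ ≤ T + c * e := iSup_enorm_le_of_eq_add hg_eq hg₂
  have hS₁ : ⨆ x, ‖h₁ x‖ₑ ≤ S + d * e := iSup_enorm_le_of_eq_add hh_eq hh₂
  have hcde : c * d * e ≤ K := le_trans (le_mul_of_one_le_left' one_le_two) hle
  refine ⟨g₁ * h₁, g₁ * h₂ + g₂ * h, by rw [hg_eq, hh_eq]; ring, ?_, fun x => ?_⟩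
  · calc N (g₁ * h₁) ≤ C * (N g₁ * (⨆ x, ‖h₁ x‖ₑ) + (⨆ x, ‖g₁ x‖ₑ) * N h₁) :=
          hN g₁ h₁ (ne_top_of_le_ne_top (ENNReal.add_ne_top.2 ⟨hg, hce⟩) hT₁)
            (ne_top_of_le_ne_top (ENNReal.add_ne_top.2 ⟨hh, hde⟩) hS₁)
      _ ≤ C * (c * w * (S + d * e) + (T + c * e) * (d * w)) := by gcongr
      _ = C * (K + 2 * (c * d * e)) * w := by ring
      _ ≤ C * (K + K) * w := by gcongr
      _ = 2 * C * K * w := by ring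
      _ ≤ L * K * w := by gcongr
  · calc ‖(g₁ * h₂ + g₂ * h) x‖ₑ ≤ ‖g₁ x‖ₑ * ‖h₂ x‖ₑ + ‖g₂ x‖ₑ * ‖h x‖ₑ := by
          simpa only [Pi.add_apply, Pi.mul_apply, enorm_mul] using
            enorm_add_le (g₁ x * h₂ x) (g₂ x * h x)
      _ ≤ (T + c * e) * (d * e) + c * e * S := by
          gcongr
          exacts [(le_iSup (fun x => ‖g₁ x‖ₑ) x).trans hT₁, hh₂ x, hg₂ x,
            le_iSup (fun x => ‖h x‖ₑ) x]
      _ = (K + c * d * e) * e := by ring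
      _ ≤ (K + K) * e := by gcongr
      _ = 2 * K * e := by ring
      _ ≤ L * K * e := by gcongr

lemma IsInterpBound.mul {C L : ℝ≥0∞} (hN0 : N 0 = 0) (hN : SatisfiesLeibniz N C)
    (hCL : 2 * C ≤ L) (hL : 2 ≤ L) (hg : (⨆ x, ‖g x‖ₑ) ≠ ⊤) (hh : (⨆ x, ‖h x‖ₑ) ≠ ⊤)
    {c d : ℝ≥0∞} (hc : c ≠ ⊤) (hd : d ≠ ⊤) (hgc : IsInterpBound N γ g c)
    (hhd : IsInterpBound N γ h d) :
    IsInterpBound N γ (g * h) (L * (c * (⨆ x, ‖h x‖ₑ) + (⨆ x, ‖g x‖ₑ) * d)) := by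
  intro ε hε hε₁
  rcases le_or_gt (2 * (c * d * ENNReal.ofReal ε)) (c * (⨆ x, ‖h x‖ₑ) + (⨆ x, ‖g x‖ₑ) * d)
    with hle | hlt
  · exact hasSplitting_mul_of_two_mul_le hN hCL hL hg hh (by finiteness) (by finiteness)
      (hgc ε hε hε₁) (hhd ε hε hε₁) hle
  · exact hasSplitting_mul_of_lt hN0 _ hL hc hlt

theorem interpNorm_mul_le {C : ℝ≥0∞} {L : ℝ≥0} (hN0 : N 0 = 0) (hN : SatisfiesLeibniz N C)
    (hCL : 2 * C ≤ L) (hL : 2 ≤ L) (hg : (⨆ x, ‖g x‖ₑ) ≠ ⊤) (hh : (⨆ x, ‖h x‖ₑ) ≠ ⊤)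
    (hg' : interpNorm N γ g ≠ ⊤) (hh' : interpNorm N γ h ≠ ⊤) :
    interpNorm N γ (g * h) ≤
      L * (interpNorm N γ g * (⨆ x, ‖h x‖ₑ) + (⨆ x, ‖g x‖ₑ) * interpNorm N γ h) := by
  refine ENNReal.le_of_forall_pos_le_add_mul
    (K := L * ((⨆ x, ‖h x‖ₑ) + ⨆ x, ‖g x‖ₑ)) (by finiteness) fun η hη hη' => ?_
  have hgη := isInterpBound_of_interpNorm_lt (ENNReal.lt_add_right hg' hη.ne')
  have hhη := isInterpBound_of_interpNorm_lt (ENNReal.lt_add_right hh' hη.ne')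
  calc interpNorm N γ (g * h)
      ≤ L * ((interpNorm N γ g + η) * (⨆ x, ‖h x‖ₑ) + (⨆ x, ‖g x‖ₑ) * (interpNorm N γ h + η)) :=
        interpNorm_le_of_isInterpBound <| hgη.mul hN0 hN hCL (by exact_mod_cast hL) hg hh
          (by finiteness) (by finiteness) hhη
    _ = L * (interpNorm N γ g * (⨆ x, ‖h x‖ₑ) + (⨆ x, ‖g x‖ₑ) * interpNorm N γ h) +
          η * (L * ((⨆ x, ‖h x‖ₑ) + ⨆ x, ‖g x‖ₑ)) := by ring

end Splitting

lemma two_mul_ofReal_sqrt_two_le_three : 2 * ENNReal.ofReal √2 ≤ ((3 : ℝ≥0) : ℝ≥0∞) := by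
  rw [← ENNReal.ofReal_ofNat 2, ← ENNReal.ofReal_mul zero_le_two, ENNReal.coe_ofNat,
    ← ENNReal.ofReal_ofNat 3]
  refine ENNReal.ofReal_le_ofReal ?_
  nlinarith [Real.sq_sqrt (zero_le_two : (0 : ℝ) ≤ 2), Real.sqrt_nonneg 2]

theorem stmt9_general {X : Type*} (N : (X → ℝ) → ℝ≥0∞) (γ : ℝ)
    (hhom : ∀ (t : ℝ) (w : X → ℝ), (∃ M : ℝ, ∀ x, |w x| ≤ M) →
      N (fun x => t * w x) = ENNReal.ofReal |t| * N w)
    (hprod : ∀ w h : X → ℝ, (∃ M : ℝ, ∀ x, |w x| ≤ M) → (∃ M : ℝ, ∀ x, |h x| ≤ M) →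
      N (fun x => w x * h x) ≤
        ENNReal.ofReal (Real.sqrt 2) *
          (N w * (⨆ x, ENNReal.ofReal |h x|) + (⨆ x, ENNReal.ofReal |w x|) * N h))
    (g h : X → ℝ) (hg : ∃ M : ℝ, ∀ x, |g x| ≤ M) (hh : ∃ M : ℝ, ∀ x, |h x| ≤ M)
    (hg1 : interpNorm N γ g < ⊤)
    (hh1 : interpNorm N γ h < ⊤) :
    interpNorm N γ (fun x => g x * h x) ≤
      3 * (interpNorm N γ g * (⨆ x, ENNReal.ofReal |h x|)
        + (⨆ x, ENNReal.ofReal |g x|) * interpNorm N γ h) := by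
  have hN0 : N 0 = 0 := by simpa [Pi.zero_def] using hhom 0 0 ⟨0, by simp⟩
  have hN : SatisfiesLeibniz N (ENNReal.ofReal √2) := fun u v hu hv => by
    simpa only [Real.enorm_eq_ofReal_abs, Pi.mul_def] using
      hprod u v (exists_abs_le_iff_iSup_enorm_ne_top.2 hu)
        (exists_abs_le_iff_iSup_enorm_ne_top.2 hv)
  simpa only [Real.enorm_eq_ofReal_abs, ENNReal.coe_ofNat, Pi.mul_def] using
    interpNorm_mul_le hN0 hN two_mul_ofReal_sqrt_two_le_three (by norm_num)
      (exists_abs_le_iff_iSup_enorm_ne_top.1 hg) (exists_abs_le_iff_iSup_enorm_ne_top.1 hh)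
      hg1.ne hh1.ne

/-- A Leibniz-type inequality for `N` (with constant `√2`) implies a Leibniz-type
inequality for the interpolated functional `N_γ` (with constant `3`). -/
theorem stmt9 {X : Type*} (N : (X → ℝ) → ℝ≥0∞) (γ : ℝ) (hγ : 0 < γ)
    (hhom : ∀ (t : ℝ) (w : X → ℝ), (∃ M : ℝ, ∀ x, |w x| ≤ M) →
      N (fun x => t * w x) = ENNReal.ofReal |t| * N w)
    (hprod : ∀ w h : X → ℝ, (∃ M : ℝ, ∀ x, |w x| ≤ M) → (∃ M : ℝ, ∀ x, |h x| ≤ M) →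
      N (fun x => w x * h x) ≤
        ENNReal.ofReal (Real.sqrt 2) *
          (N w * (⨆ x, ENNReal.ofReal |h x|) + (⨆ x, ENNReal.ofReal |w x|) * N h))
    (g h : X → ℝ) (hg : ∃ M : ℝ, ∀ x, |g x| ≤ M) (hh : ∃ M : ℝ, ∀ x, |h x| ≤ M)
    (hg0 : 0 < interpNorm N γ g) (hg1 : interpNorm N γ g < ⊤)
    (hh0 : 0 < interpNorm N γ h) (hh1 : interpNorm N γ h < ⊤) :
    interpNorm N γ (fun x => g x * h x) ≤
      3 * (interpNorm N γ g * (⨆ x, ENNReal.ofReal |h x|)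
        + (⨆ x, ENNReal.ofReal |g x|) * interpNorm N γ h) :=
  stmt9_general N γ hhom hprod g h hg hh hg1 hh1
end

section
/- Let m ≥ 1 be an integer and let p > 0, d > 1, A > 1, c₀ > 0, c_A > 0 be real numbers, and let η be a real number with η > (A/d)^{p/(p+1)}. Then there exists a constant C > 0, depending only on m, p, d, A, η, c₀, c_A, with the following property: for every integer n ≥ 0 and every continuous function g : B(0,2) → ℝ on the open Euclidean ball B(0,2) ⊂ ℝᵐ satisfying ∫_{B(0,2)} e^{dⁿ·|g|} dLeb ≤ c₀ and |g(x) − g(y)| ≤ c_A^p · A^{p n} · (1 + |log |x − y||)^{−p} for all x ≠ y in B(0,2), one has |g(x)| ≤ C·ηⁿ for every x in the closed ball of radius 1. -/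
/-!
On the ball of radius `exp (-dⁿ δ)` around `x` the oscillation bound gives `|g| ≥ |g x| - δ`, so
the exponential integral is at least `exp (dⁿ (|g x| - δ)) · ω · exp (-m dⁿ δ)`, whence
`|g x| ≤ (1 + m) δ + O(d⁻ⁿ)`. The oscillation at that scale, `c_A^p A^{pn} (dⁿ δ)^(-p)`, equals `δ`
exactly for `δ = (c_A (A/d)ⁿ)^{p/(p+1)} ≤ c_A^{p/(p+1)} ηⁿ`, and `d⁻ⁿ ≤ ηⁿ` because
`η > (A/d)^{p/(p+1)} ≥ 1/d`.
-/

open MeasureTheory Metric Real Module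

lemma one_add_abs_log_rpow_neg_le {p L s : ℝ} (hp : 0 ≤ p) (hL : 0 < L) (hs : 0 < s)
    (hsL : s ≤ exp (-L)) : (1 + |log s|) ^ (-p) ≤ L ^ (-p) := by
  have hlog : log s ≤ -L := (log_le_iff_le_exp hs).2 hsL
  exact rpow_le_rpow_of_nonpos hL (by linarith [neg_le_abs (log s)]) (by linarith)

lemma abs_sub_abs_le_of_log_modulus {E : Type*} [NormedAddCommGroup E] {g : E → ℝ}
    {U : Set E} {K p L : ℝ} (hp : 0 ≤ p) (hK : 0 ≤ K) (hL : 0 < L)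
    (hosc : ∀ x ∈ U, ∀ y ∈ U, x ≠ y → |g x - g y| ≤ K * (1 + |log ‖x - y‖|) ^ (-p))
    {x : E} (hsub : ball x (exp (-L)) ⊆ U) {y : E} (hy : y ∈ ball x (exp (-L))) :
    |g x| - |g y| ≤ K * L ^ (-p) := by
  rcases eq_or_ne x y with rfl | hxy
  · simpa using by positivity
  have hxU : x ∈ U := hsub (mem_ball_self (exp_pos _))
  have hxy_lt : ‖x - y‖ < exp (-L) := by rwa [mem_ball, dist_comm, dist_eq_norm] at hy
  calc |g x| - |g y| ≤ |g x - g y| := abs_sub_abs_le_abs_sub _ _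
    _ ≤ K * (1 + |log ‖x - y‖|) ^ (-p) := hosc x hxU y (hsub hy) hxy
    _ ≤ K * L ^ (-p) := mul_le_mul_of_nonneg_left (one_add_abs_log_rpow_neg_le hp hL
        (norm_pos_iff.2 (sub_ne_zero.2 hxy)) hxy_lt.le) hK

lemma oscillation_at_balanced_scale {c A d p : ℝ} (hc : 0 < c) (hA : 0 < A) (hd : 0 < d)
    (hp : 0 < p) (n : ℕ) :
    c ^ p * A ^ (p * n) * (d ^ n * (c * (A / d) ^ n) ^ (p / (p + 1))) ^ (-p)
      = (c * (A / d) ^ n) ^ (p / (p + 1)) := by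
  set b := c * (A / d) ^ n
  set δ := b ^ (p / (p + 1))
  have hb : 0 < b := by positivity
  have hδ : 0 < δ := by positivity
  have hδp : δ ^ (p + 1) = b ^ p := by
    rw [← rpow_mul hb.le, div_mul_cancel₀ _ (by linarith)]
  have hK : c ^ p * A ^ (p * n) = (d ^ n) ^ p * δ ^ (p + 1) := by
    rw [hδp, ← mul_rpow (by positivity) hb.le, mul_comm p, rpow_mul hA.le, rpow_natCast,
      ← mul_rpow hc.le (by positivity)]
    congr 1
    simp only [b, div_pow]
    field_simp
  rw [hK, mul_rpow (by positivity) hδ.le, rpow_add hδ, rpow_one]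
  have hD : (d ^ n) ^ p * (d ^ n) ^ (-p) = 1 := by
    rw [← rpow_add (by positivity), add_neg_cancel, rpow_zero]
  have hδ' : δ ^ p * δ ^ (-p) = 1 := by
    rw [← rpow_add hδ, add_neg_cancel, rpow_zero]
  linear_combination δ * (d ^ n) ^ p * (d ^ n) ^ (-p) * hδ' + δ * hD

lemma le_log_of_setLIntegral_exp_le {E : Type*} [NormedAddCommGroup E] [NormedSpace ℝ E]
    [MeasurableSpace E] [BorelSpace E] [FiniteDimensional ℝ E] (μ : Measure E)
    [μ.IsAddHaarMeasure] {F : E → ℝ} {U : Set E} {x : E} {a r c₀ : ℝ} (hr : 0 < r)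
    (hc₀ : 0 < c₀) (hsub : ball x r ⊆ U) (hF : ∀ y ∈ ball x r, a ≤ F y)
    (hint : ∫⁻ y in U, ENNReal.ofReal (exp (F y)) ∂μ ≤ ENNReal.ofReal c₀) :
    a + finrank ℝ E * log r + log (μ (ball 0 1)).toReal ≤ log c₀ := by
  set ω := (μ (ball 0 1)).toReal
  have hω : 0 < ω := ENNReal.toReal_pos (measure_ball_pos μ 0 one_pos).ne' measure_ball_lt_top.ne
  have hmass : ENNReal.ofReal (exp a) * μ (ball x r) ≤ ENNReal.ofReal c₀ :=
    calc ENNReal.ofReal (exp a) * μ (ball x r)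
        = ∫⁻ _ in ball x r, ENNReal.ofReal (exp a) ∂μ := (setLIntegral_const _ _).symm
      _ ≤ ∫⁻ y in ball x r, ENNReal.ofReal (exp (F y)) ∂μ :=
          setLIntegral_mono' measurableSet_ball
            fun y hy ↦ ENNReal.ofReal_le_ofReal (exp_le_exp.2 (hF y hy))
      _ ≤ ∫⁻ y in U, ENNReal.ofReal (exp (F y)) ∂μ := lintegral_mono_set hsub
      _ ≤ ENNReal.ofReal c₀ := hint
  rw [Measure.addHaar_ball_of_pos μ x hr, ← mul_assoc, ← ENNReal.ofReal_mul (exp_pos a).le,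
    ← ENNReal.ofReal_toReal measure_ball_lt_top.ne, ← ENNReal.ofReal_mul (by positivity),
    ENNReal.ofReal_le_ofReal_iff hc₀.le] at hmass
  have hpos : 0 < exp a * r ^ finrank ℝ E * ω := by positivity
  have := log_le_log hpos hmass
  rwa [log_mul (by positivity) hω.ne', log_mul (exp_pos a).ne' (by positivity), log_exp,
    log_pow] at this

lemma inv_le_div_rpow {A d θ : ℝ} (hA : 1 ≤ A) (hd : 1 ≤ d) (hθ₀ : 0 ≤ θ) (hθ₁ : θ ≤ 1) :
    d⁻¹ ≤ (A / d) ^ θ := by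
  rw [div_rpow (by linarith) (by linarith), inv_eq_one_div]
  have hdθ : d ^ θ ≤ d := rpow_le_self_of_one_le hd hθ₁
  calc 1 / d ≤ 1 / d ^ θ := one_div_le_one_div_of_le (by positivity) hdθ
    _ ≤ A ^ θ / d ^ θ := by gcongr; exact one_le_rpow hA hθ₀

theorem stmt10_general (m : ℕ) (p d A c₀ cA η : ℝ)
    (hp : 0 < p) (hd : 1 < d) (hA : 1 < A) (hc₀ : 0 < c₀) (hcA : 0 < cA)
    (hη : (A / d) ^ (p / (p + 1)) < η) :
    ∃ C : ℝ, 0 < C ∧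
      ∀ (n : ℕ) (g : EuclideanSpace ℝ (Fin m) → ℝ),
        ContinuousOn g (Metric.ball 0 2) →
        (∫⁻ x in Metric.ball (0 : EuclideanSpace ℝ (Fin m)) 2,
            ENNReal.ofReal (Real.exp (d ^ n * |g x|)) ≤ ENNReal.ofReal c₀) →
        (∀ x ∈ Metric.ball (0 : EuclideanSpace ℝ (Fin m)) 2,
          ∀ y ∈ Metric.ball (0 : EuclideanSpace ℝ (Fin m)) 2, x ≠ y →
            |g x - g y| ≤ cA ^ p * A ^ (p * n) * (1 + |Real.log ‖x - y‖|) ^ (-p)) →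
        ∀ x ∈ Metric.closedBall (0 : EuclideanSpace ℝ (Fin m)) 1, |g x| ≤ C * η ^ n := by
  set θ := p / (p + 1)
  have hθ₀ : 0 ≤ θ := by positivity
  have hθ₁ : θ ≤ 1 := div_le_one_of_le₀ (by linarith) (by linarith)
  set b := log c₀ - log (volume (ball (0 : EuclideanSpace ℝ (Fin m)) 1)).toReal
  refine ⟨(1 + m) * cA ^ θ + |b|, by positivity, ?_⟩
  intro n g _ hint hosc x hx
  set δ := (cA * (A / d) ^ n) ^ θ
  have hD : 0 < d ^ n := by positivity
  have hL : 0 < d ^ n * δ := by positivity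
  have hsub : ball x (exp (-(d ^ n * δ))) ⊆ ball 0 2 :=
    ball_subset_ball' (by linarith [mem_closedBall.1 hx, exp_le_one_iff.2 (neg_nonpos.2 hL.le)])
  have hlow : ∀ y ∈ ball x (exp (-(d ^ n * δ))), d ^ n * (|g x| - δ) ≤ d ^ n * |g y| := by
    intro y hy
    have := abs_sub_abs_le_of_log_modulus hp.le (by positivity) hL hosc hsub hy
    rw [oscillation_at_balanced_scale hcA (by linarith) (by linarith) hp] at this
    gcongr
    linarith
  have hlog := le_log_of_setLIntegral_exp_le volume (exp_pos _) hc₀ hsub hlow hint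
  rw [finrank_euclideanSpace_fin, log_exp] at hlog
  have hδη : δ ≤ cA ^ θ * η ^ n := by
    rw [show δ = (cA * (A / d) ^ n) ^ θ from rfl, mul_rpow hcA.le (by positivity),
      ← rpow_pow_comm (by positivity)]
    gcongr
  have hηd : 1 ≤ η ^ n * d ^ n := by
    rw [← mul_pow]
    have := inv_le_div_rpow hA.le hd.le hθ₀ hθ₁
    exact one_le_pow₀ (by rw [← inv_le_iff_one_le_mul₀ (by linarith)]; linarith)
  refine le_of_mul_le_mul_left ?_ hD
  calc d ^ n * |g x| ≤ (1 + m) * (d ^ n * δ) + b := by linarith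
    _ ≤ (1 + m) * (d ^ n * (cA ^ θ * η ^ n)) + |b| * (η ^ n * d ^ n) := by
      gcongr
      exact (le_abs_self b).trans (le_mul_of_one_le_right (abs_nonneg b) hηd)
    _ = d ^ n * (((1 + m) * cA ^ θ + |b|) * η ^ n) := by ring

/-- Exponential sup-norm bound: if `∫_{B(0,2)} e^{dⁿ|g|} ≤ c₀` and `g` has
`log^p`-oscillation at most `c_A^p A^{pn}`, then `|g| ≤ C ηⁿ` on the closed unit ball,
for every `η > (A/d)^{p/(p+1)}`, with `C` independent of `n` and `g`. -/
theorem stmt10 (m : ℕ) (hm : 1 ≤ m) (p d A c₀ cA η : ℝ)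
    (hp : 0 < p) (hd : 1 < d) (hA : 1 < A) (hc₀ : 0 < c₀) (hcA : 0 < cA)
    (hη : (A / d) ^ (p / (p + 1)) < η) :
    ∃ C : ℝ, 0 < C ∧
      ∀ (n : ℕ) (g : EuclideanSpace ℝ (Fin m) → ℝ),
        ContinuousOn g (Metric.ball 0 2) →
        (∫⁻ x in Metric.ball (0 : EuclideanSpace ℝ (Fin m)) 2,
            ENNReal.ofReal (Real.exp (d ^ n * |g x|)) ≤ ENNReal.ofReal c₀) →
        (∀ x ∈ Metric.ball (0 : EuclideanSpace ℝ (Fin m)) 2,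
          ∀ y ∈ Metric.ball (0 : EuclideanSpace ℝ (Fin m)) 2, x ≠ y →
            |g x - g y| ≤ cA ^ p * A ^ (p * n) * (1 + |Real.log ‖x - y‖|) ^ (-p)) →
        ∀ x ∈ Metric.closedBall (0 : EuclideanSpace ℝ (Fin m)) 1, |g x| ≤ C * η ^ n :=
  stmt10_general m p d A c₀ cA η hp hd hA hc₀ hcA hη
end

section
/- (Local Gärtner–Ellis theorem of Bougerol–Lacroix) For each integer n ≥ 1 let (Ωₙ, ℙₙ) be a probability space and Sₙ : Ωₙ → ℝ a random variable. Let θ₀ > 0 and let Λ : [−θ₀, θ₀] → ℝ be a continuously differentiable, strictly convex function with Λ'(0) = 0. Assume that for every θ ∈ [−θ₀, θ₀], (1/n)·log ∫_{Ωₙ} e^{θ·Sₙ} dℙₙ converges to Λ(θ) as n → ∞. Define c(ε) := sup{ θ·ε − Λ(θ) : |θ| ≤ θ₀ } for ε ∈ ℝ. Then for every ε with 0 < ε < Λ(θ₀)/θ₀, one has c(ε) > 0 and (1/n)·log ℙₙ( Sₙ > n·ε ) converges to −c(ε) as n → ∞. -/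
/-!
Strict convexity and `Λ'(0) = 0 < ε < Λ(θ₀)/θ₀` give, by the mean value theorem and Darboux's
theorem, a point `θ* ∈ (0, θ₀)` with `Λ'(θ*) = ε`; the tangent line there shows that the Legendre
supremum is attained at `θ*`, so `c(ε) = θ* ε - Λ(θ*) > 0`. The upper bound is Chernoff's
inequality at `θ*`. For the lower bound, take `θ` slightly above `θ*` and split `E exp (θ Sₙ)`
along `Sₙ ≤ nε`, `nε < Sₙ < nb`, `nb ≤ Sₙ` with `b` slightly above `Λ'(θ)`: comparing with
`E exp ((θ ∓ s) Sₙ)`, strict convexity makes the outer pieces exponentially negligible, so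
`exp (nθb) ℙ(Sₙ > nε)` grows at least at rate `Λ(θ)`, and `Λ(θ) - θ b` is close to `-c(ε)`.
-/

open MeasureTheory Filter Topology Real ProbabilityTheory

section Convex

variable {f : ℝ → ℝ} {D : Set ℝ} {x y : ℝ}

lemma ConvexOn.add_deriv_mul_sub_le (hf : ConvexOn ℝ D f) (hx : x ∈ D) (hy : y ∈ D)
    (hfx : DifferentiableAt ℝ f x) : f x + deriv f x * (y - x) ≤ f y := by
  rcases lt_trichotomy x y with hxy | rfl | hyx
  · have := hf.deriv_le_slope hx hy hxy hfx
    rw [slope_def_field, le_div_iff₀ (sub_pos.2 hxy)] at this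
    linarith
  · simp
  · have := hf.slope_le_deriv hy hx hyx hfx
    rw [slope_def_field, div_le_iff₀ (sub_pos.2 hyx)] at this
    linarith

lemma StrictConvexOn.add_deriv_mul_sub_lt (hf : StrictConvexOn ℝ D f) (hx : x ∈ D) (hy : y ∈ D)
    (hxy : x ≠ y) (hfx : DifferentiableAt ℝ f x) : f x + deriv f x * (y - x) < f y := by
  rcases hxy.lt_or_gt with hxy | hyx
  · have := hf.deriv_lt_slope hx hy hxy hfx
    rw [slope_def_field, lt_div_iff₀ (sub_pos.2 hxy)] at this
    linarith
  · have := hf.slope_lt_deriv hy hx hyx hfx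
    rw [slope_def_field, div_lt_iff₀ (sub_pos.2 hyx)] at this
    linarith

lemma ConvexOn.isGreatest_image_mul_deriv_sub (hf : ConvexOn ℝ D f) (hx : x ∈ D)
    (hfx : DifferentiableAt ℝ f x) :
    IsGreatest ((fun y => y * deriv f x - f y) '' D) (x * deriv f x - f x) := by
  refine ⟨⟨x, hx, rfl⟩, ?_⟩
  rintro _ ⟨y, hy, rfl⟩
  have := hf.add_deriv_mul_sub_le hx hy hfx
  linarith

lemma exists_mem_Ioo_deriv_eq {a b m : ℝ} (hab : a < b) (hf : ContinuousOn f (Set.Icc a b))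
    (hfd : ∀ x ∈ Set.Ico a b, DifferentiableAt ℝ f x) (hma : deriv f a < m)
    (hmb : m < slope f a b) : ∃ c ∈ Set.Ioo a b, deriv f c = m := by
  obtain ⟨t, ht, hft⟩ := exists_deriv_eq_slope' f hab hf
    fun x hx => (hfd x (Set.Ioo_subset_Ico_self hx)).differentiableWithinAt
  obtain ⟨c, hc, hfc⟩ := exists_hasDerivWithinAt_eq_of_gt_of_lt ht.1.le
    (fun x hx => (hfd x ⟨hx.1, hx.2.trans_lt ht.2⟩).hasDerivAt.hasDerivWithinAt) hma (hft ▸ hmb)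
  exact ⟨c, ⟨hc.1, hc.2.trans ht.2⟩, hfc⟩

/-- The tilting parameters of the lower bound: the rate `f θ - θ b` is within any margin of
`f x - x f'(x)`, while `exp (θ S)` puts exponentially little mass on `S ≤ n f'(x)` and `S ≥ n b`. -/
lemma StrictConvexOn.exists_tilt {U : Set ℝ} (hU : IsOpen U) (hf : StrictConvexOn ℝ U f)
    (hfd : ∀ y ∈ U, DifferentiableAt ℝ f y) (hf' : ContinuousAt (deriv f) x) (hx : x ∈ U)
    {r : ℝ} (hr : r < f x - x * deriv f x) :
    ∃ θ s b, 0 < s ∧ x < θ - s ∧ θ + s ∈ U ∧ s * deriv f x + f (θ - s) < f θ ∧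
      f (θ + s) - s * b < f θ ∧ r + θ * b < f θ := by
  have hg : ContinuousAt (fun t => f t - t * deriv f t) x :=
    (hfd x hx).continuousAt.sub (continuousAt_id.mul hf')
  obtain ⟨θ, ⟨hrθ, hθU⟩, hxθ⟩ : ∃ θ, (r < f θ - θ * deriv f θ ∧ θ ∈ U) ∧ x < θ :=
    ((((hg.eventually (lt_mem_nhds hr)).and (hU.mem_nhds hx)).filter_mono nhdsWithin_le_nhds).and
      (self_mem_nhdsWithin : Set.Ioi x ∈ 𝓝[>] x)).exists
  obtain ⟨b, hrb, hb⟩ : ∃ b, r + θ * b < f θ ∧ deriv f θ < b := by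
    have : ContinuousAt (fun b => r + θ * b) (deriv f θ) := by fun_prop
    exact (((this.eventually (gt_mem_nhds (by linarith))).filter_mono nhdsWithin_le_nhds).and
      (self_mem_nhdsWithin : Set.Ioi (deriv f θ) ∈ 𝓝[>] deriv f θ)).exists
  have hθs : Tendsto (fun s => θ + s) (𝓝 0) (𝓝 θ) := by
    simpa using (continuous_const_add θ).tendsto 0
  obtain ⟨s, ⟨hsb, hsx, hsU⟩, hs⟩ :
      ∃ s, (s⁻¹ * (f (θ + s) - f θ) < b ∧ s < θ - x ∧ θ + s ∈ U) ∧ 0 < s :=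
    (((hfd θ hθU).hasDerivAt.tendsto_slope_zero_right.eventually (gt_mem_nhds hb)).and
      (((eventually_lt_nhds (sub_pos.2 hxθ)).and (hθs.eventually (hU.mem_nhds hθU))).filter_mono
        nhdsWithin_le_nhds)).and self_mem_nhdsWithin |>.exists
  have hθsU : θ - s ∈ U := hf.1.ordConnected.out hx hθU ⟨by linarith, by linarith⟩
  have hderiv : deriv f x < deriv f (θ - s) := hf.strictMonoOn_deriv hfd hx hθsU (by linarith)
  have hslope := hf.convexOn.deriv_le_slope hθsU hθU (by linarith) (hfd _ hθsU)
  rw [slope_def_field, sub_sub_cancel, le_div_iff₀ hs] at hslope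
  rw [inv_mul_lt_iff₀ hs] at hsb
  refine ⟨θ, s, b, hs, by linarith, hsU, by nlinarith, by linarith, hrb⟩

lemma StrictConvexOn.lt_of_deriv_eq_zero (hf : StrictConvexOn ℝ D f) (hx : x ∈ D) (hy : y ∈ D)
    (hxy : x ≠ y) (hfx : DifferentiableAt ℝ f x) (hf'x : deriv f x = 0) : f x < f y := by
  simpa [hf'x] using hf.add_deriv_mul_sub_lt hx hy hxy hfx

lemma StrictConvexOn.exists_deriv_eq_isGreatest_image_mul_sub {θ₀ ε : ℝ} (hθ₀ : 0 < θ₀)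
    (hf : StrictConvexOn ℝ (Set.Icc (-θ₀) θ₀) f) (hcont : ContinuousOn f (Set.Icc (-θ₀) θ₀))
    (hfd : ∀ t ∈ Set.Ioo (-θ₀) θ₀, DifferentiableAt ℝ f t) (h0 : f 0 = 0) (h'0 : deriv f 0 = 0)
    (hε : 0 < ε) (hεlt : ε < f θ₀ / θ₀) :
    ∃ θ ∈ Set.Ioo 0 θ₀, deriv f θ = ε ∧
      IsGreatest ((fun t => t * ε - f t) '' Set.Icc (-θ₀) θ₀) (θ * ε - f θ) ∧
      0 < θ * ε - f θ := by
  obtain ⟨θ, hθ, hderiv⟩ := exists_mem_Ioo_deriv_eq hθ₀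
    (hcont.mono (Set.Icc_subset_Icc (by linarith) le_rfl))
    (fun t ht => hfd t ⟨by linarith [ht.1], ht.2⟩) (h'0 ▸ hε)
    (by rwa [slope_def_field, h0, sub_zero, sub_zero])
  have hθI : θ ∈ Set.Icc (-θ₀) θ₀ := ⟨by linarith [hθ.1], hθ.2.le⟩
  have hθd : DifferentiableAt ℝ f θ := hfd θ ⟨by linarith [hθ.1], hθ.2⟩
  have hmax := hf.convexOn.isGreatest_image_mul_deriv_sub hθI hθd
  have htan := hf.add_deriv_mul_sub_lt hθI ⟨by linarith, hθ₀.le⟩ hθ.1.ne' hθd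
  rw [hderiv] at hmax htan
  exact ⟨θ, hθ, hderiv, hmax, by linarith⟩

end Convex

noncomputable def logRate (u : ℕ → ℝ) (n : ℕ) : ℝ := 1 / n * log (u n)

section LogRate

variable {u : ℕ → ℝ} {L r : ℝ} {n : ℕ}

lemma exp_mul_le_iff_le_logRate (hn : n ≠ 0) (hu : 0 < u n) :
    exp (n * r) ≤ u n ↔ r ≤ logRate u n := by
  rw [logRate, ← le_log_iff_exp_le hu, one_div, ← div_eq_inv_mul, le_div_iff₀' (by positivity)]

lemma le_exp_mul_iff_logRate_le (hn : n ≠ 0) (hu : 0 < u n) :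
    u n ≤ exp (n * r) ↔ logRate u n ≤ r := by
  rw [logRate, ← log_le_iff_le_exp hu, one_div, ← div_eq_inv_mul, div_le_iff₀' (by positivity)]

lemma eventually_ne_zero_of_tendsto_logRate (h : Tendsto (logRate u) atTop (𝓝 L)) (hL : L ≠ 0) :
    ∀ᶠ n in atTop, u n ≠ 0 := by
  filter_upwards [h.eventually_ne hL] with n hn hu
  simp [logRate, hu] at hn

lemma eventually_exp_mul_le_of_tendsto_logRate (h : Tendsto (logRate u) atTop (𝓝 L))
    (hL : L ≠ 0) (hu : ∀ n, 0 ≤ u n) (hr : r < L) :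
    ∀ᶠ n : ℕ in atTop, exp (n * r) ≤ u n := by
  filter_upwards [eventually_ne_zero_of_tendsto_logRate h hL, h.eventually (eventually_ge_nhds hr),
    eventually_ne_atTop 0] with n hun hrn hn
  exact (exp_mul_le_iff_le_logRate hn ((hu n).lt_of_ne' hun)).2 hrn

lemma eventually_le_exp_mul_of_tendsto_logRate (h : Tendsto (logRate u) atTop (𝓝 L))
    (hu : ∀ n, 0 ≤ u n) (hr : L < r) :
    ∀ᶠ n : ℕ in atTop, u n ≤ exp (n * r) := by
  filter_upwards [h.eventually (eventually_le_nhds hr), eventually_ne_atTop 0] with n hrn hn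
  rcases (hu n).eq_or_lt with hun | hun
  · rw [← hun]; positivity
  · exact (le_exp_mul_iff_logRate_le hn hun).2 hrn

lemma tendsto_logRate_of_eventually_exp_mul_bounds
    (hlo : ∀ r < L, ∀ᶠ n : ℕ in atTop, exp (n * r) ≤ u n)
    (hhi : ∀ r, L < r → ∀ᶠ n : ℕ in atTop, u n ≤ exp (n * r)) :
    Tendsto (logRate u) atTop (𝓝 L) := by
  refine tendsto_order.2 ⟨fun r hr => ?_, fun r hr => ?_⟩
  · obtain ⟨r', hrr', hr'L⟩ := exists_between hr
    filter_upwards [hlo r' hr'L, eventually_ne_atTop 0] with n hn hn0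
    exact hrr'.trans_le ((exp_mul_le_iff_le_logRate hn0 ((exp_pos _).trans_le hn)).1 hn)
  · obtain ⟨r', hLr', hr'r⟩ := exists_between hr
    filter_upwards [hlo (L - 1) (by linarith), hhi r' hLr', eventually_ne_atTop 0]
      with n hpos hn hn0
    exact ((le_exp_mul_iff_logRate_le hn0 ((exp_pos _).trans_le hpos)).1 hn).trans_lt hr'r

lemma eventually_mul_exp_mul_le (C : ℝ) {κ ρ : ℝ} (h : κ < ρ) :
    ∀ᶠ n : ℕ in atTop, C * exp (n * κ) ≤ exp (n * ρ) := by
  have : Tendsto (fun n : ℕ => exp (n * (ρ - κ))) atTop atTop :=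
    tendsto_exp_atTop.comp (tendsto_natCast_atTop_atTop.atTop_mul_const (sub_pos.2 h))
  filter_upwards [this.eventually_ge_atTop C] with n hn
  calc C * exp (n * κ) ≤ exp (n * (ρ - κ)) * exp (n * κ) := by gcongr
    _ = exp (n * ρ) := by rw [← exp_add]; ring_nf

end LogRate

/-- Splitting according to `X ≤ a`, `a < X < b` and `b ≤ X`: on the outer pieces `exp (θ X)` is
dominated by the shifted exponentials, on the middle one by `exp (θ b)`. -/
lemma mgf_le_shifted_mgf_add_measureReal_gt {Ω : Type*} [MeasurableSpace Ω] {μ : Measure Ω}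
    [IsFiniteMeasure μ] {X : Ω → ℝ} {θ s : ℝ} (a b : ℝ) (hθ : 0 ≤ θ) (hs : 0 ≤ s)
    (hX : AEMeasurable X μ) (hm : Integrable (fun ω => exp ((θ - s) * X ω)) μ)
    (hp : Integrable (fun ω => exp ((θ + s) * X ω)) μ) :
    mgf X μ θ ≤ exp (s * a) * mgf X μ (θ - s) + exp (-(s * b)) * mgf X μ (θ + s)
      + exp (θ * b) * μ.real {ω | a < X ω} := by
  set A := {ω | a < X ω}
  have hA : NullMeasurableSet A μ := nullMeasurableSet_lt aemeasurable_const hX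
  have hpt : ∀ ω, exp (θ * X ω) ≤ exp (s * a) * exp ((θ - s) * X ω)
      + exp (-(s * b)) * exp ((θ + s) * X ω) + A.indicator (fun _ => exp (θ * b)) ω := by
    intro ω
    rw [← exp_add, ← exp_add]
    have h1 := exp_pos (s * a + (θ - s) * X ω)
    have h2 := exp_pos (-(s * b) + (θ + s) * X ω)
    have h3 : 0 ≤ A.indicator (fun _ => exp (θ * b)) ω :=
      Set.indicator_nonneg (fun _ _ => (exp_pos _).le) _
    rcases le_or_gt (X ω) a with hxa | hax
    · have : exp (θ * X ω) ≤ exp (s * a + (θ - s) * X ω) := exp_le_exp.2 (by nlinarith)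
      linarith
    rcases lt_or_ge (X ω) b with hxb | hbx
    · have : exp (θ * X ω) ≤ exp (θ * b) := exp_le_exp.2 (by nlinarith)
      rw [Set.indicator_of_mem (show ω ∈ A from hax)]
      linarith
    · have : exp (θ * X ω) ≤ exp (-(s * b) + (θ + s) * X ω) := exp_le_exp.2 (by nlinarith)
      linarith
  have hind : Integrable (A.indicator fun _ => exp (θ * b)) μ :=
    (integrable_const _).indicator₀ hA
  have hexp : Integrable (fun ω => exp (s * a) * exp ((θ - s) * X ω)
      + exp (-(s * b)) * exp ((θ + s) * X ω)) μ := (hm.const_mul _).add (hp.const_mul _)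
  calc mgf X μ θ ≤ ∫ ω, (exp (s * a) * exp ((θ - s) * X ω)
      + exp (-(s * b)) * exp ((θ + s) * X ω) + A.indicator (fun _ => exp (θ * b)) ω) ∂μ :=
        integral_mono_of_nonneg (ae_of_all _ fun _ => (exp_pos _).le) (hexp.add hind)
          (ae_of_all _ hpt)
    _ = _ := by
      rw [integral_add hexp hind, integral_add (hm.const_mul _) (hp.const_mul _),
        integral_const_mul, integral_const_mul, integral_indicator₀ hA, setIntegral_const,
        smul_eq_mul, mul_comm _ (exp (θ * b))]
      rfl

section Rates

variable {Ω : ℕ → Type*} [∀ n, MeasurableSpace (Ω n)] {P : ∀ n, Measure (Ω n)}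
  {S : ∀ n, Ω n → ℝ}

-- A non-integrable `exp (θ * S n)` has Bochner integral `0`, and `log 0 = 0`.
lemma eventually_integrable_exp_mul_of_tendsto_logRate {θ L : ℝ}
    (h : Tendsto (logRate fun n => mgf (S n) (P n) θ) atTop (𝓝 L)) (hL : L ≠ 0) :
    ∀ᶠ n in atTop, Integrable (fun ω => exp (θ * S n ω)) (P n) := by
  filter_upwards [eventually_ne_zero_of_tendsto_logRate h hL] with n hn
  by_contra hint
  exact hn (integral_undef hint)

variable [∀ n, IsFiniteMeasure (P n)]

lemma eventually_measureReal_lt_le_exp_mul {θ a L r : ℝ} (hθ : 0 ≤ θ)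
    (h : Tendsto (logRate fun n => mgf (S n) (P n) θ) atTop (𝓝 L)) (hL : L ≠ 0)
    (hr : L - θ * a < r) :
    ∀ᶠ n : ℕ in atTop, (P n).real {ω | n * a < S n ω} ≤ exp (n * r) := by
  filter_upwards [eventually_integrable_exp_mul_of_tendsto_logRate h hL,
    eventually_le_exp_mul_of_tendsto_logRate h (fun _ => mgf_nonneg)
      (show L < r + θ * a by linarith)] with n hint hmgf
  calc (P n).real {ω | n * a < S n ω} ≤ (P n).real {ω | n * a ≤ S n ω} :=
        measureReal_mono (Set.ofPred_subset_ofPred.2 fun _ => le_of_lt)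
    _ ≤ exp (-θ * (n * a)) * mgf (S n) (P n) θ := measure_ge_le_exp_mul_mgf _ hθ hint
    _ ≤ exp (-θ * (n * a)) * exp (n * (r + θ * a)) := by gcongr
    _ = exp (n * r) := by rw [← exp_add]; ring_nf

lemma eventually_exp_mul_le_measureReal_lt {θ s a b Lm L Lp r : ℝ} (hθ : 0 ≤ θ) (hs : 0 < s)
    (hm : Tendsto (logRate fun n => mgf (S n) (P n) (θ - s)) atTop (𝓝 Lm)) (hLm : Lm ≠ 0)
    (h : Tendsto (logRate fun n => mgf (S n) (P n) θ) atTop (𝓝 L)) (hL : L ≠ 0)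
    (hp : Tendsto (logRate fun n => mgf (S n) (P n) (θ + s)) atTop (𝓝 Lp)) (hLp : Lp ≠ 0)
    (hma : s * a + Lm < L) (hpb : Lp - s * b < L) (hr : r + θ * b < L) :
    ∀ᶠ n : ℕ in atTop, exp (n * r) ≤ (P n).real {ω | n * a < S n ω} := by
  set κ := max (max (s * a + Lm) (Lp - s * b)) (r + θ * b)
  obtain ⟨ρ, hκρ, hρL⟩ : ∃ ρ, κ < ρ ∧ ρ < L := exists_between (by simp [κ, *])
  obtain ⟨κ', hκκ', hκ'ρ⟩ := exists_between hκρ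
  have hκm : s * a + Lm ≤ κ := (le_max_left _ _).trans (le_max_left _ _)
  have hκp : Lp - s * b ≤ κ := (le_max_right _ _).trans (le_max_left _ _)
  have hκr : r + θ * b ≤ κ := le_max_right _ _
  filter_upwards [eventually_integrable_exp_mul_of_tendsto_logRate hm hLm,
    eventually_integrable_exp_mul_of_tendsto_logRate hp hLp,
    eventually_exp_mul_le_of_tendsto_logRate h hL (fun _ => mgf_nonneg) hρL,
    eventually_le_exp_mul_of_tendsto_logRate hm (fun _ => mgf_nonneg)
      (show Lm < κ' - s * a by linarith),
    eventually_le_exp_mul_of_tendsto_logRate hp (fun _ => mgf_nonneg)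
      (show Lp < κ' + s * b by linarith),
    eventually_mul_exp_mul_le 3 hκ'ρ] with n hintm hintp hZ hZm hZp h3
  have hX := aemeasurable_of_integrable_exp_mul (by linarith : θ - s < θ + s).ne hintm hintp
  have htilt := mgf_le_shifted_mgf_add_measureReal_gt (n * a) (n * b) hθ hs.le hX hintm hintp
  have h1 : exp (s * (n * a)) * mgf (S n) (P n) (θ - s) ≤ exp (n * κ') :=
    calc _ ≤ exp (s * (n * a)) * exp (n * (κ' - s * a)) := by gcongr
      _ = exp (n * κ') := by rw [← exp_add]; ring_nf
  have h2 : exp (-(s * (n * b))) * mgf (S n) (P n) (θ + s) ≤ exp (n * κ') :=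
    calc _ ≤ exp (-(s * (n * b))) * exp (n * (κ' + s * b)) := by gcongr
      _ = exp (n * κ') := by rw [← exp_add]; ring_nf
  have h4 : exp (θ * (n * b)) * exp (n * r) ≤ exp (n * κ') := by
    rw [← exp_add]; exact exp_le_exp.2 (by nlinarith [(Nat.cast_nonneg n : (0 : ℝ) ≤ n)])
  exact le_of_mul_le_mul_left (by linarith) (exp_pos (θ * (n * b)))

lemma eventually_exp_mul_le_measureReal_lt_of_deriv_eq {Λ : ℝ → ℝ} {θ₀ θ ε r : ℝ}
    (hC1 : ContDiffOn ℝ 1 Λ (Set.Ioo 0 θ₀)) (hconv : StrictConvexOn ℝ (Set.Ioo 0 θ₀) Λ)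
    (hrate : ∀ t ∈ Set.Ioo 0 θ₀, Tendsto (logRate fun n => mgf (S n) (P n) t) atTop (𝓝 (Λ t)))
    (hΛ : ∀ t ∈ Set.Ioo 0 θ₀, Λ t ≠ 0) (hθ : θ ∈ Set.Ioo 0 θ₀) (hderiv : deriv Λ θ = ε)
    (hr : r < Λ θ - θ * ε) :
    ∀ᶠ n : ℕ in atTop, exp (n * r) ≤ (P n).real {ω | n * ε < S n ω} := by
  have hdiff : ∀ t ∈ Set.Ioo 0 θ₀, DifferentiableAt ℝ Λ t := fun t ht =>
    (hC1.differentiableOn one_ne_zero t ht).differentiableAt (isOpen_Ioo.mem_nhds ht)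
  have hderivc : ContinuousAt (deriv Λ) θ :=
    (hC1.continuousOn_deriv_of_isOpen isOpen_Ioo le_rfl).continuousAt (isOpen_Ioo.mem_nhds hθ)
  obtain ⟨θ', s, b, hs, hθθ', hθ'U, hma, hpb, hrb⟩ :=
    hconv.exists_tilt isOpen_Ioo hdiff hderivc hθ (r := r) (by rwa [hderiv])
  rw [hderiv] at hma
  have hm : θ' - s ∈ Set.Ioo 0 θ₀ := ⟨by linarith [hθ.1], by linarith [hθ'U.2]⟩
  have h : θ' ∈ Set.Ioo 0 θ₀ := ⟨by linarith [hθ.1], by linarith [hθ'U.2]⟩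
  exact eventually_exp_mul_le_measureReal_lt h.1.le hs (hrate _ hm) (hΛ _ hm)
    (hrate _ h) (hΛ _ h) (hrate _ hθ'U) (hΛ _ hθ'U) hma hpb hrb

end Rates

/-- Local Gärtner–Ellis theorem of Bougerol–Lacroix: if the normalized logarithmic moment
generating functions of `Sₙ` converge on `[-θ₀, θ₀]` to a `C¹` strictly convex function `Λ`
with `Λ'(0) = 0`, then a large deviation principle holds with rate given by the Legendre
transform of `Λ`. -/
theorem stmt12 (Ω : ℕ → Type*) [∀ n, MeasurableSpace (Ω n)]
    (P : ∀ n, Measure (Ω n)) [∀ n, IsProbabilityMeasure (P n)]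
    (S : ∀ n, Ω n → ℝ) (θ₀ : ℝ) (hθ₀ : 0 < θ₀) (Λ : ℝ → ℝ)
    (hΛC1 : ContDiffOn ℝ 1 Λ (Set.Icc (-θ₀) θ₀))
    (hΛconv : StrictConvexOn ℝ (Set.Icc (-θ₀) θ₀) Λ)
    (hΛ'0 : deriv Λ 0 = 0)
    (hlim : ∀ θ ∈ Set.Icc (-θ₀) θ₀,
      Tendsto (fun n : ℕ => (1 / (n : ℝ)) * Real.log (∫ ω, Real.exp (θ * S n ω) ∂P n))
        atTop (𝓝 (Λ θ))) :
    ∀ ε : ℝ, 0 < ε → ε < Λ θ₀ / θ₀ →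
      0 < sSup ((fun θ => θ * ε - Λ θ) '' Set.Icc (-θ₀) θ₀) ∧
      Tendsto (fun n : ℕ =>
          (1 / (n : ℝ)) * Real.log ((P n {ω | (n : ℝ) * ε < S n ω}).toReal))
        atTop (𝓝 (-sSup ((fun θ => θ * ε - Λ θ) '' Set.Icc (-θ₀) θ₀))) := by
  intro ε hε hεlt
  have hUI : Set.Ioo (-θ₀) θ₀ ⊆ Set.Icc (-θ₀) θ₀ := Set.Ioo_subset_Icc_self
  have hIU : Set.Ioo 0 θ₀ ⊆ Set.Ioo (-θ₀) θ₀ := Set.Ioo_subset_Ioo_left (by linarith)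
  have hdiff : ∀ t ∈ Set.Ioo (-θ₀) θ₀, DifferentiableAt ℝ Λ t := fun t ht =>
    (hΛC1.differentiableOn one_ne_zero t (hUI ht)).differentiableAt (Icc_mem_nhds ht.1 ht.2)
  have h0 : (0 : ℝ) ∈ Set.Ioo (-θ₀) θ₀ := ⟨by linarith, hθ₀⟩
  have hΛ0 : Λ 0 = 0 := tendsto_nhds_unique (hlim 0 (hUI h0)) (by simp)
  have hΛ : ∀ t ∈ Set.Ioo 0 θ₀, Λ t ≠ 0 := fun t ht => (hΛ0 ▸
    (hΛconv.subset hUI (convex_Ioo _ _)).lt_of_deriv_eq_zero h0 (hIU ht) ht.1.ne (hdiff 0 h0)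
      hΛ'0).ne'
  have hrate : ∀ t ∈ Set.Ioo 0 θ₀,
      Tendsto (logRate fun n => mgf (S n) (P n) t) atTop (𝓝 (Λ t)) :=
    fun t ht => hlim t (hUI (hIU ht))
  obtain ⟨θ, hθ, hderiv, hmax, hc⟩ := hΛconv.exists_deriv_eq_isGreatest_image_mul_sub hθ₀
    hΛC1.continuousOn hdiff hΛ0 hΛ'0 hε hεlt
  rw [hmax.csSup_eq]
  refine ⟨hc, tendsto_logRate_of_eventually_exp_mul_bounds (fun r hr => ?_) (fun r hr => ?_)⟩
  · exact eventually_exp_mul_le_measureReal_lt_of_deriv_eq (hΛC1.mono (hIU.trans hUI))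
      (hΛconv.subset (hIU.trans hUI) (convex_Ioo _ _)) hrate hΛ hθ hderiv (by linarith)
  · exact eventually_measureReal_lt_le_exp_mul hθ.1.le (hrate θ hθ) (hΛ θ hθ) (by linarith)
end
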